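/- Let (T,*,[[·,·,·]],b) be a quadratic left Bol algebra over ℝ and let Π: T → T be a pseudoderivation of T with companion χ ∈ T. Define φ(Π)(x,y) := b(Π(x),y) + b(x,Π(y)). Then φ(Π) satisfies the associativity condition φ(Π)(x*y,z) = φ(Π)(x,y*z) for all x,y,z ∈ T if and only if for every w ∈ T the endomorphism ℛ_χ(w): T → T defined by ℛ_χ(w)(z) := [[z,w,χ]] - (z*w)*χ is b-skew-symmetric, i.e. b(ℛ_χ(w)(z),y) = -b(z,ℛ_χ(w)(y)) for all y,z ∈ T. -/

import Mathlib

/-- A left Bol algebra over ℝ: a real vector space with a bilinear operation `mul`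
and a trilinear operation `tri` satisfying (T01), (T02), (T1), (T2) and (T3). -/
structure LeftBolAlgebra (T : Type*) [AddCommGroup T] [Module ℝ T] where
  mul : T →ₗ[ℝ] T →ₗ[ℝ] T
  tri : T →ₗ[ℝ] T →ₗ[ℝ] T →ₗ[ℝ] T
  mul_anticomm : ∀ x y : T, mul x y = - mul y x
  tri_skew : ∀ x y z : T, tri x y z = - tri y x z
  tri_cyclic : ∀ x y z : T, tri x y z + tri y z x + tri z x y = 0
  tri_leibniz : ∀ u v x y z : T,
    tri u v (tri x y z) = tri (tri u v x) y z + tri x (tri u v y) z + tri x y (tri u v z)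
  bol : ∀ u v x y : T, tri u v (mul x y) =
    mul (tri u v x) y + mul x (tri u v y) + tri x y (mul u v) - mul (mul x y) (mul u v)

/-!
Write `ℛ_χ(w) z = [[z,w,χ]] - (z*w)*χ`; this is exactly the defect term in the
pseudoderivation rule `Π(x*y) = Π(x)*y + x*Π(y) + ℛ_χ(y) x`. Expanding both sides of
`φ(Π)(x*y,z) = φ(Π)(x,y*z)` with this rule and cancelling the derivation-like terms by
invariance of `b` leaves `b(ℛ_χ(y) x, z) = b(x, ℛ_χ(z) y)`. Since `ℛ_χ(w) z` is
antisymmetric in `(w, z)`, the right-hand side equals `-b(x, ℛ_χ(y) z)`, which is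
skew-symmetry of `ℛ_χ(y)`.
-/

theorem LinearMap.BilinForm.forall_apply_swap_eq_iff_forall_skew {R M : Type*} [CommRing R]
    [AddCommGroup M] [Module R M] (b : LinearMap.BilinForm R M) (S : M → M → M)
    (hS : ∀ w z, S w z = - S z w) :
    (∀ x y z, b (S y x) z = b x (S z y)) ↔ ∀ w z y, b (S w z) y = - b z (S w y) := by
  refine forall_comm.trans (forall₃_congr fun w z y => ?_)
  rw [hS y w, map_neg]

namespace LeftBolAlgebra

variable {T : Type*} [AddCommGroup T] [Module ℝ T] (A : LeftBolAlgebra T)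

def rChi (χ w z : T) : T :=
  A.tri z w χ - A.mul (A.mul z w) χ

theorem rChi_swap (χ w z : T) : A.rChi χ w z = - A.rChi χ z w := by
  simp only [rChi, A.tri_skew z w, A.mul_anticomm z w, map_neg, LinearMap.neg_apply]
  abel

theorem phi_mul_sub_phi_mul (b : LinearMap.BilinForm ℝ T)
    (hassoc : ∀ x y z : T, b (A.mul x y) z = b x (A.mul y z)) (Pd : T →ₗ[ℝ] T) (χ : T)
    (hP1 : ∀ x y : T, Pd (A.mul x y) =
      A.mul (Pd x) y + A.mul x (Pd y) + A.tri x y χ - A.mul (A.mul x y) χ) (x y z : T) :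
    (b (Pd (A.mul x y)) z + b (A.mul x y) (Pd z)) -
        (b (Pd x) (A.mul y z) + b x (Pd (A.mul y z))) =
      b (A.rChi χ y x) z - b x (A.rChi χ z y) := by
  simp only [hP1, rChi, map_add, map_sub, LinearMap.add_apply, LinearMap.sub_apply]
  linear_combination hassoc (Pd x) y z + hassoc x (Pd y) z + hassoc x y (Pd z)

end LeftBolAlgebra

theorem phi_assoc_iff_Rchi_skew
    {T : Type*} [AddCommGroup T] [Module ℝ T] (A : LeftBolAlgebra T)
    (b : LinearMap.BilinForm ℝ T)
    (hassoc : ∀ x y z : T, b (A.mul x y) z = b x (A.mul y z))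
    (Pd : T →ₗ[ℝ] T) (χ : T)
    (hP1 : ∀ x y : T, Pd (A.mul x y) =
      A.mul (Pd x) y + A.mul x (Pd y) + A.tri x y χ - A.mul (A.mul x y) χ) :
    (∀ x y z : T,
        b (Pd (A.mul x y)) z + b (A.mul x y) (Pd z) =
          b (Pd x) (A.mul y z) + b x (Pd (A.mul y z))) ↔
      (∀ w z y : T,
        b (A.tri z w χ - A.mul (A.mul z w) χ) y =
          - b z (A.tri y w χ - A.mul (A.mul y w) χ)) := by
  have hphi : ∀ x y z : T,
      (b (Pd (A.mul x y)) z + b (A.mul x y) (Pd z) =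
          b (Pd x) (A.mul y z) + b x (Pd (A.mul y z))) ↔
        b (A.rChi χ y x) z = b x (A.rChi χ z y) := fun x y z => by
    rw [← sub_eq_zero, A.phi_mul_sub_phi_mul b hassoc Pd χ hP1, sub_eq_zero]
  exact (forall₃_congr hphi).trans
    (b.forall_apply_swap_eq_iff_forall_skew (A.rChi χ) (A.rChi_swap χ))
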